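/- The graph K₁ ∨ 2K_m, the join of one vertex with two disjoint complete graphs of order m ≥ 1, has minimum degree m, bipartite-hole-number at most m + 1, satisfies δ ≥ α̃ − 1, and is not hamiltonian (for m ≥ 1, since its unique cut vertex obstructs any Hamilton cycle). -/

import Mathlib

open scoped Classical

/-- An `(s,t)`-bipartite-hole: disjoint vertex sets of sizes `s` and `t` with no edge between. -/
def HasBipHole {V : Type*} (G : SimpleGraph V) (s t : ℕ) : Prop :=
  ∃ S T : Finset V, Disjoint S T ∧ S.card = s ∧ T.card = t ∧
    ∀ a ∈ S, ∀ b ∈ T, ¬ G.Adj a b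

/-- The bipartite-hole-number: least `k` admitting positive `s,t` with `s+t = k+1` and
no `(s,t)`-bipartite-hole. -/
noncomputable def bhn {V : Type*} (G : SimpleGraph V) : ℕ :=
  sInf {k | ∃ s t : ℕ, 0 < s ∧ 0 < t ∧ s + t = k + 1 ∧ ¬ HasBipHole G s t}

/-- The join `G ∨ K₁`: one new vertex adjacent to everything. -/
def joinK1 {V : Type*} (G : SimpleGraph V) : SimpleGraph (Option V) where
  Adj a b := match a, b with
    | some a, some b => G.Adj a b
    | some _, none => True
    | none, some _ => True
    | none, none => False
  symm := ⟨by
    rintro (_ | a) (_ | b) h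
    · exact h.elim
    · trivial
    · trivial
    · exact G.adj_symm h⟩
  loopless := ⟨by
    rintro (_ | a) h
    · exact h
    · exact G.irrefl h⟩

/-- Minimum degree sum over non-adjacent pairs of distinct vertices. -/
noncomputable def sigma2 {V : Type*} [Fintype V] (G : SimpleGraph V) : ℕ :=
  sInf {m | ∃ x y : V, x ≠ y ∧ ¬ G.Adj x y ∧ G.degree x + G.degree y = m}

/-- A graph is traceable if it has a Hamilton path. -/
def IsTraceable {V : Type*} (G : SimpleGraph V) : Prop :=
  ∃ (a b : V) (p : G.Walk a b), p.IsHamiltonian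

/-- `G` is 2-connected: at least 3 vertices and deleting any vertex leaves it connected. -/
def TwoConnected {V : Type*} [Fintype V] (G : SimpleGraph V) : Prop :=
  3 ≤ Fintype.card V ∧ ∀ v : V, (SimpleGraph.induce ({v}ᶜ : Set V) G).Connected

/-! Each vertex of a clique side sees its own clique and the apex, and the apex sees everything,
so `δ = m`. A vertex then has at most `m` non-neighbours among the other `2m` vertices, which rules
out a `(1, m + 1)`-bipartite-hole and gives `α̃ ≤ m + 1`. Finally, deleting a vertex from a Hamilton
cycle leaves a Hamilton path of the rest, so no vertex of a hamiltonian graph is a cut vertex,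
whereas deleting the apex separates the two cliques. -/

open Finset

section BipartiteHoles

open SimpleGraph

variable {V : Type*} {G : SimpleGraph V}

theorem bhn_le_of_not_hasBipHole {s t : ℕ} (hs : 0 < s) (ht : 0 < t) (h : ¬ HasBipHole G s t) :
    bhn G ≤ s + t - 1 :=
  Nat.sInf_le ⟨s, t, hs, ht, by omega, h⟩

theorem not_hasBipHole_one_of_card_lt [Fintype V] [DecidableRel G.Adj] {t : ℕ}
    (h : Fintype.card V < G.minDegree + 1 + t) : ¬ HasBipHole G 1 t := by
  rintro ⟨S, T, hST, hS, rfl, hno⟩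
  obtain ⟨c, rfl⟩ := card_eq_one.mp hS
  have hT : T ⊆ (insert c (G.neighborFinset c))ᶜ := fun u hu ↦ by
    simp only [mem_compl, mem_insert, mem_neighborFinset, not_or]
    exact ⟨fun huc ↦ disjoint_left.mp hST (mem_singleton_self c) (huc ▸ hu),
      hno c (mem_singleton_self c) u hu⟩
  have hcard := card_le_card hT
  rw [card_compl, card_insert_of_notMem (by simp), card_neighborFinset_eq_degree] at hcard
  have := G.minDegree_le_degree c
  have := G.degree_lt_card_verts c
  omega

end BipartiteHoles

namespace SimpleGraph

variable {V : Type*} {G : SimpleGraph V}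

theorem Reachable.eq_of_forall_adj {β : Type*} {f : V → β} (hf : ∀ u v, G.Adj u v → f u = f v)
    {u v : V} (huv : G.Reachable u v) : f u = f v := by
  obtain ⟨p⟩ := huv
  induction p with
  | nil => rfl
  | cons h _ ih => exact (hf _ _ h).trans ih

theorem IsHamiltonian.preconnected_induce_compl_singleton [Fintype V] [DecidableEq V]
    (hG : G.IsHamiltonian) (x : V) : (G.induce ({x}ᶜ : Set V)).Preconnected := by
  rcases subsingleton_or_nontrivial V with hV | hV
  · rintro ⟨u, hu⟩
    exact absurd (Subsingleton.elim u x) hu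
  obtain ⟨p, hp⟩ := hG.exists_isHamiltonianCycle x
  have hnil : ¬ p.tail.Nil := by
    rw [Walk.not_nil_iff_lt_length, Walk.length_tail]
    have := hp.three_le_length
    omega
  -- the Hamiltonian path `p.tail` ends at `x`, so dropping its last vertex leaves exactly `{x}ᶜ`
  have hsupp : {v | v ∈ p.tail.dropLast.support} = {x}ᶜ := by
    ext v
    have hcount := hp.isHamiltonian_tail v
    rw [← Walk.support_dropLast_concat hnil, List.count_append,
      List.count_singleton] at hcount
    rw [Set.mem_ofPred_eq, Set.mem_compl_singleton_iff, ← List.count_pos_iff]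
    split_ifs at hcount <;> grind
  exact hsupp ▸ p.tail.dropLast.connected_induce_support.preconnected

section Cone

variable [Fintype V]

structure IsConeOverTwoCliques (G : SimpleGraph V) (x : V) (A B : Finset V) : Prop where
  disjoint : Disjoint A B
  union_eq : A ∪ B = univ \ {x}
  adj_iff : ∀ u v, G.Adj u v ↔ u ≠ v ∧ (u = x ∨ v = x ∨ (u ∈ A ∧ v ∈ A) ∨ (u ∈ B ∧ v ∈ B))

namespace IsConeOverTwoCliques

variable {x : V} {A B : Finset V}

theorem symm (h : G.IsConeOverTwoCliques x A B) : G.IsConeOverTwoCliques x B A :=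
  ⟨h.disjoint.symm, union_comm B A ▸ h.union_eq, fun u v ↦ by rw [h.adj_iff]; tauto⟩

theorem ne_of_mem_left (h : G.IsConeOverTwoCliques x A B) {v : V} (hv : v ∈ A) : v ≠ x := by
  have hv' : v ∈ A ∪ B := mem_union_left B hv
  rw [h.union_eq] at hv'
  simpa using hv'

theorem mem_left_or_mem_right (h : G.IsConeOverTwoCliques x A B) {v : V} (hv : v ≠ x) :
    v ∈ A ∨ v ∈ B := by
  rw [← mem_union, h.union_eq]
  simpa using hv

theorem neighborFinset_of_mem_left [DecidableRel G.Adj] (h : G.IsConeOverTwoCliques x A B)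
    {v : V} (hv : v ∈ A) : G.neighborFinset v = insert x (A.erase v) := by
  have hvB : v ∉ B := Finset.disjoint_left.mp h.disjoint hv
  have hvx := h.ne_of_mem_left hv
  ext u
  simp only [mem_neighborFinset, h.adj_iff, mem_insert, mem_erase]
  grind

theorem degree_of_mem_left [DecidableRel G.Adj] (h : G.IsConeOverTwoCliques x A B) {v : V}
    (hv : v ∈ A) : G.degree v = #A := by
  rw [← card_neighborFinset_eq_degree, h.neighborFinset_of_mem_left hv,
    card_insert_of_notMem fun hx ↦ h.ne_of_mem_left (mem_of_mem_erase hx) rfl,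
    card_erase_add_one hv]

theorem card_left_le_degree_apex [DecidableRel G.Adj] (h : G.IsConeOverTwoCliques x A B) :
    #A ≤ G.degree x := by
  rw [← card_neighborFinset_eq_degree]
  refine card_le_card fun v hv ↦ ?_
  rw [mem_neighborFinset, h.adj_iff]
  exact ⟨(h.ne_of_mem_left hv).symm, Or.inl rfl⟩

theorem minDegree_eq [DecidableRel G.Adj] (h : G.IsConeOverTwoCliques x A B) (hA : A.Nonempty)
    (hB : B.Nonempty) : G.minDegree = min #A #B := by
  obtain ⟨a, ha⟩ := hA
  obtain ⟨b, hb⟩ := hB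
  have : Nonempty V := ⟨a⟩
  refine le_antisymm (le_min ?_ ?_) (le_minDegree_of_forall_le_degree _ _ fun v ↦ ?_)
  · exact h.degree_of_mem_left ha ▸ G.minDegree_le_degree a
  · exact h.symm.degree_of_mem_left hb ▸ G.minDegree_le_degree b
  by_cases hvx : v = x
  · exact hvx ▸ (min_le_left _ _).trans h.card_left_le_degree_apex
  rcases h.mem_left_or_mem_right hvx with hv | hv
  · exact h.degree_of_mem_left hv ▸ min_le_left _ _
  · exact h.symm.degree_of_mem_left hv ▸ min_le_right _ _

theorem card_eq (h : G.IsConeOverTwoCliques x A B) : Fintype.card V = #A + #B + 1 := by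
  have hcard := congrArg card h.union_eq
  rw [card_union_of_disjoint h.disjoint, ← compl_eq_univ_sdiff, card_compl,
    card_singleton] at hcard
  have := Fintype.card_pos_iff.mpr ⟨x⟩
  omega

theorem not_preconnected_induce_compl_apex (h : G.IsConeOverTwoCliques x A B)
    (hA : A.Nonempty) (hB : B.Nonempty) : ¬ (G.induce ({x}ᶜ : Set V)).Preconnected := by
  obtain ⟨a, ha⟩ := hA
  obtain ⟨b, hb⟩ := hB
  intro hconn
  have hab := (hconn ⟨a, h.ne_of_mem_left ha⟩ ⟨b, h.symm.ne_of_mem_left hb⟩).eq_of_forall_adj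
    (f := fun v : ({x}ᶜ : Set V) ↦ v.1 ∈ A) ?_
  · exact Finset.disjoint_left.mp h.disjoint (hab ▸ ha) hb
  rintro ⟨u, hu⟩ ⟨v, hv⟩ huv
  rw [comap_adj, Function.Embedding.subtype_apply, Function.Embedding.subtype_apply,
    h.adj_iff] at huv
  have hAB := Finset.disjoint_left.mp h.disjoint
  simp only [Set.mem_compl_singleton_iff] at hu hv
  grind

theorem not_isHamiltonian [DecidableEq V] (h : G.IsConeOverTwoCliques x A B) (hA : A.Nonempty)
    (hB : B.Nonempty) : ¬ G.IsHamiltonian := fun hG ↦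
  h.not_preconnected_induce_compl_apex hA hB (hG.preconnected_induce_compl_singleton x)

end IsConeOverTwoCliques

end Cone

end SimpleGraph

theorem stmt14_general {V : Type*} [Fintype V] (G : SimpleGraph V) [DecidableRel G.Adj]
    (m : ℕ) (hm : 1 ≤ m)
    (x : V) (A B : Finset V) (hdisj : Disjoint A B)
    (hcover : A ∪ B = Finset.univ \ {x}) (hA : A.card = m) (hB : B.card = m)
    (hadj : ∀ u v : V, G.Adj u v ↔
      u ≠ v ∧ (u = x ∨ v = x ∨ (u ∈ A ∧ v ∈ A) ∨ (u ∈ B ∧ v ∈ B))) :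
    G.minDegree = m ∧ bhn G ≤ m + 1 ∧ bhn G - 1 ≤ G.minDegree ∧ ¬ G.IsHamiltonian := by
  have hG : G.IsConeOverTwoCliques x A B := ⟨hdisj, hcover, hadj⟩
  have hAne : A.Nonempty := card_pos.mp (by omega)
  have hBne : B.Nonempty := card_pos.mp (by omega)
  have hmin : G.minDegree = m := by rw [hG.minDegree_eq hAne hBne, hA, hB, min_self]
  have hbhn : bhn G ≤ m + 1 := by
    refine (bhn_le_of_not_hasBipHole one_pos (Nat.succ_pos m)
      (not_hasBipHole_one_of_card_lt ?_)).trans (by omega)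
    rw [hG.card_eq, hmin, hA, hB]
    omega
  exact ⟨hmin, hbhn, by omega, hG.not_isHamiltonian hAne hBne⟩

theorem stmt14 {V : Type*} [Fintype V] (G : SimpleGraph V) [DecidableRel G.Adj]
    (m : ℕ) (hm : 1 ≤ m)
    (x : V) (A B : Finset V) (hdisj : Disjoint A B) (hxA : x ∉ A) (hxB : x ∉ B)
    (hcover : A ∪ B = Finset.univ \ {x}) (hA : A.card = m) (hB : B.card = m)
    (hadj : ∀ u v : V, G.Adj u v ↔
      u ≠ v ∧ (u = x ∨ v = x ∨ (u ∈ A ∧ v ∈ A) ∨ (u ∈ B ∧ v ∈ B))) :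
    G.minDegree = m ∧ bhn G ≤ m + 1 ∧ bhn G - 1 ≤ G.minDegree ∧ ¬ G.IsHamiltonian :=
  stmt14_general G m hm x A B hdisj hcover hA hB hadj
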